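/- Let H = H₁ ⊕ H₂ with Ω = [[Ω₁, Γ],[Γ†, Ω₂]] self-adjoint on a finite-dimensional space. The system is reconstructible (i.e., O_Ω(H₁) = H and O_Ω(H₂) = H) if and only if neither H₁ nor H₂ contains a nonzero Ω-invariant subspace. -/

import Mathlib

noncomputable section

open LinearMap Module

/-- The smallest `Ω`-invariant subspace containing a subset `S`. -/
def orbit {H : Type*} [NormedAddCommGroup H] [InnerProductSpace ℂ H]
    (Ω : H →ₗ[ℂ] H) (S : Set H) : Submodule ℂ H :=
  sInf {W : Submodule ℂ H | S ⊆ (W : Set H) ∧ ∀ x ∈ W, Ω x ∈ W}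

theorem orbit_invariant {H : Type*} [NormedAddCommGroup H] [InnerProductSpace ℂ H]
    (Ω : H →ₗ[ℂ] H) (S : Set H) : ∀ x ∈ orbit Ω S, Ω x ∈ orbit Ω S := by
  intro x hx
  simp only [orbit, Submodule.mem_sInf] at hx ⊢
  intro W hW
  exact hW.2 x (hx W hW)

variable (H₁ H₂ : Type*)
  [NormedAddCommGroup H₁] [InnerProductSpace ℂ H₁] [FiniteDimensional ℂ H₁]
  [NormedAddCommGroup H₂] [InnerProductSpace ℂ H₂] [FiniteDimensional ℂ H₂]

/-- The orthogonal direct sum `H = H₁ ⊕ H₂`. -/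
abbrev DirSum := WithLp 2 (H₁ × H₂)

/-- Isometric embedding of `H₁` into `H₁ ⊕ H₂`. -/
def emb1 : H₁ →ₗ[ℂ] DirSum H₁ H₂ :=
  (WithLp.linearEquiv 2 ℂ (H₁ × H₂)).symm.toLinearMap ∘ₗ LinearMap.inl ℂ H₁ H₂

/-- Isometric embedding of `H₂` into `H₁ ⊕ H₂`. -/
def emb2 : H₂ →ₗ[ℂ] DirSum H₁ H₂ :=
  (WithLp.linearEquiv 2 ℂ (H₁ × H₂)).symm.toLinearMap ∘ₗ LinearMap.inr ℂ H₁ H₂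

/-- Projection of `H₁ ⊕ H₂` onto the first coordinate. -/
def proj1 : DirSum H₁ H₂ →ₗ[ℂ] H₁ :=
  LinearMap.fst ℂ H₁ H₂ ∘ₗ (WithLp.linearEquiv 2 ℂ (H₁ × H₂)).toLinearMap

/-- Projection of `H₁ ⊕ H₂` onto the second coordinate. -/
def proj2 : DirSum H₁ H₂ →ₗ[ℂ] H₂ :=
  LinearMap.snd ℂ H₁ H₂ ∘ₗ (WithLp.linearEquiv 2 ℂ (H₁ × H₂)).toLinearMap

/-- The copy of `H₁` inside `H₁ ⊕ H₂`. -/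
def sub1 : Submodule ℂ (DirSum H₁ H₂) := LinearMap.range (emb1 H₁ H₂)

/-- The copy of `H₂` inside `H₁ ⊕ H₂`. -/
def sub2 : Submodule ℂ (DirSum H₁ H₂) := LinearMap.range (emb2 H₁ H₂)

variable {H₁ H₂}

/-- The block operator `Ω = [[Ω₁, Γ], [Γ†, Ω₂]]` acting on `H₁ ⊕ H₂` by
`Ω(v₁, v₂) = (Ω₁ v₁ + Γ v₂, Γ† v₁ + Ω₂ v₂)`. -/
def blockOp (Ω₁ : H₁ →ₗ[ℂ] H₁) (Ω₂ : H₂ →ₗ[ℂ] H₂) (Γ : H₂ →ₗ[ℂ] H₁) :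
    DirSum H₁ H₂ →ₗ[ℂ] DirSum H₁ H₂ :=
  emb1 H₁ H₂ ∘ₗ (Ω₁ ∘ₗ proj1 H₁ H₂ + Γ ∘ₗ proj2 H₁ H₂) +
    emb2 H₁ H₂ ∘ₗ (LinearMap.adjoint Γ ∘ₗ proj1 H₁ H₂ + Ω₂ ∘ₗ proj2 H₁ H₂)


lemma subset_orbit {H : Type*} [NormedAddCommGroup H] [InnerProductSpace ℂ H]
    (Ω : H →ₗ[ℂ] H) (S : Set H) : S ⊆ (orbit Ω S : Set H) := by
  intro x hx
  simp only [orbit, SetLike.mem_coe, Submodule.mem_sInf]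
  exact fun W hW => hW.1 hx

lemma orbit_le {H : Type*} [NormedAddCommGroup H] [InnerProductSpace ℂ H]
    (Ω : H →ₗ[ℂ] H) (S : Set H) {W : Submodule ℂ H}
    (h1 : S ⊆ (W : Set H)) (h2 : ∀ x ∈ W, Ω x ∈ W) : orbit Ω S ≤ W :=
  sInf_le ⟨h1, h2⟩

lemma orthogonal_invariant {H : Type*} [NormedAddCommGroup H] [InnerProductSpace ℂ H]
    {Ω : H →ₗ[ℂ] H} (hΩ : Ω.IsSymmetric) {W : Submodule ℂ H}
    (hW : ∀ x ∈ W, Ω x ∈ W) : ∀ x ∈ Wᗮ, Ω x ∈ Wᗮ := by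
  intro x hx
  rw [Submodule.mem_orthogonal] at hx ⊢
  intro u hu
  rw [← hΩ u x]
  exact hx _ (hW u hu)

lemma blockOp_isSymmetric (Ω₁ : H₁ →ₗ[ℂ] H₁) (hΩ₁ : Ω₁.IsSymmetric)
    (Ω₂ : H₂ →ₗ[ℂ] H₂) (hΩ₂ : Ω₂.IsSymmetric) (Γ : H₂ →ₗ[ℂ] H₁) :
    (blockOp Ω₁ Ω₂ Γ).IsSymmetric := by
  intro x y
  simp only [blockOp, emb1, emb2, proj1, proj2, LinearMap.add_apply, LinearMap.comp_apply,
    LinearEquiv.coe_coe, WithLp.coe_linearEquiv, WithLp.coe_symm_linearEquiv,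
    LinearMap.inl_apply, LinearMap.inr_apply, LinearMap.fst_apply, LinearMap.snd_apply,
    WithLp.prod_inner_apply, inner_add_left, inner_add_right]
  simp only [WithLp.add_fst, WithLp.add_snd, WithLp.ofLp_fst, WithLp.ofLp_snd,
    WithLp.toLp_fst, WithLp.toLp_snd, WithLp.coe_symm_linearEquiv, WithLp.coe_linearEquiv, inner_add_left, inner_add_right,
    inner_zero_left, inner_zero_right, LinearMap.adjoint_inner_left,
    LinearMap.adjoint_inner_right, hΩ₁ _ _, hΩ₂ _ _]
  ring

lemma sub1_orthogonal : (sub1 H₁ H₂)ᗮ = sub2 H₁ H₂ := by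
  ext x
  rw [Submodule.mem_orthogonal]
  constructor
  · intro h
    refine ⟨x.snd, ?_⟩
    have h1 : x.fst = 0 := by
      have := h (emb1 H₁ H₂ x.fst) ⟨x.fst, rfl⟩
      simp only [emb1, LinearMap.comp_apply, LinearEquiv.coe_coe,
        WithLp.coe_symm_linearEquiv, LinearMap.inl_apply, WithLp.prod_inner_apply,
        WithLp.toLp_fst, WithLp.toLp_snd, WithLp.ofLp_fst, WithLp.ofLp_snd, inner_zero_left, add_zero] at this
      exact inner_self_eq_zero.mp this
    show (WithLp.linearEquiv 2 ℂ (H₁ × H₂)).symm.toLinearMap.comp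
      (LinearMap.inr ℂ H₁ H₂) x.snd = x
    apply WithLp.ofLp_injective; apply Prod.ext <;> simp [h1]
  · rintro ⟨v, rfl⟩ u ⟨w, rfl⟩
    simp [emb1, emb2, WithLp.prod_inner_apply]

lemma sub2_orthogonal : (sub2 H₁ H₂)ᗮ = sub1 H₁ H₂ := by
  ext x
  rw [Submodule.mem_orthogonal]
  constructor
  · intro h
    refine ⟨x.fst, ?_⟩
    have h2 : x.snd = 0 := by
      have := h (emb2 H₁ H₂ x.snd) ⟨x.snd, rfl⟩
      simp only [emb2, LinearMap.comp_apply, LinearEquiv.coe_coe,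
        WithLp.coe_symm_linearEquiv, LinearMap.inr_apply, WithLp.prod_inner_apply,
        WithLp.toLp_fst, WithLp.toLp_snd, WithLp.ofLp_fst, WithLp.ofLp_snd, inner_zero_left, zero_add] at this
      exact inner_self_eq_zero.mp this
    show (WithLp.linearEquiv 2 ℂ (H₁ × H₂)).symm.toLinearMap.comp
      (LinearMap.inl ℂ H₁ H₂) x.fst = x
    apply WithLp.ofLp_injective; apply Prod.ext <;> simp [h2]
  · rintro ⟨v, rfl⟩ u ⟨w, rfl⟩
    simp [emb1, emb2, WithLp.prod_inner_apply]

/-- The coupled system `(H₁ ⊕ H₂, Ω)` is reconstructible (each of `H₁`, `H₂` generates the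
whole space under `Ω`) if and only if neither `H₁` nor `H₂` contains a nonzero `Ω`-invariant
subspace. -/
theorem reconstructible_iff_no_invariant_subspaces
    (Ω₁ : H₁ →ₗ[ℂ] H₁) (hΩ₁ : Ω₁.IsSymmetric)
    (Ω₂ : H₂ →ₗ[ℂ] H₂) (hΩ₂ : Ω₂.IsSymmetric)
    (Γ : H₂ →ₗ[ℂ] H₁) :
    (orbit (blockOp Ω₁ Ω₂ Γ) (sub1 H₁ H₂ : Set (DirSum H₁ H₂)) = ⊤ ∧
     orbit (blockOp Ω₁ Ω₂ Γ) (sub2 H₁ H₂ : Set (DirSum H₁ H₂)) = ⊤) ↔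
    ((∀ W : Submodule ℂ (DirSum H₁ H₂),
        W ≤ sub1 H₁ H₂ → (∀ x ∈ W, blockOp Ω₁ Ω₂ Γ x ∈ W) → W = ⊥) ∧
     (∀ W : Submodule ℂ (DirSum H₁ H₂),
        W ≤ sub2 H₁ H₂ → (∀ x ∈ W, blockOp Ω₁ Ω₂ Γ x ∈ W) → W = ⊥)) := by
  have hsym := blockOp_isSymmetric Ω₁ hΩ₁ Ω₂ hΩ₂ Γ
  constructor
  · rintro ⟨h1, h2⟩
    constructor
    · intro W hW hWinv
      have h3 : orbit (blockOp Ω₁ Ω₂ Γ) (sub2 H₁ H₂ : Set (DirSum H₁ H₂)) ≤ Wᗮ := by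
        apply orbit_le
        · intro x hx
          show x ∈ Wᗮ
          apply Submodule.orthogonal_le hW
          rw [sub1_orthogonal]
          exact hx
        · exact orthogonal_invariant hsym hWinv
      rw [h2, top_le_iff] at h3
      have : W ≤ Wᗮᗮ := Submodule.le_orthogonal_orthogonal W
      rw [h3, Submodule.top_orthogonal_eq_bot] at this
      exact le_bot_iff.mp this
    · intro W hW hWinv
      have h3 : orbit (blockOp Ω₁ Ω₂ Γ) (sub1 H₁ H₂ : Set (DirSum H₁ H₂)) ≤ Wᗮ := by
        apply orbit_le
        · intro x hx
          show x ∈ Wᗮ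
          apply Submodule.orthogonal_le hW
          rw [sub2_orthogonal]
          exact hx
        · exact orthogonal_invariant hsym hWinv
      rw [h1, top_le_iff] at h3
      have : W ≤ Wᗮᗮ := Submodule.le_orthogonal_orthogonal W
      rw [h3, Submodule.top_orthogonal_eq_bot] at this
      exact le_bot_iff.mp this
  · rintro ⟨h1, h2⟩
    constructor
    · set V := orbit (blockOp Ω₁ Ω₂ Γ) (sub1 H₁ H₂ : Set (DirSum H₁ H₂)) with hV
      have hVorth : Vᗮ = ⊥ := by
        apply h2
        · rw [← sub1_orthogonal]
          exact Submodule.orthogonal_le (le_of_eq_of_le rfl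
            (fun x hx => subset_orbit _ _ hx))
        · exact orthogonal_invariant hsym (orbit_invariant _ _)
      rw [← Submodule.orthogonal_orthogonal V, hVorth, Submodule.bot_orthogonal_eq_top]
    · set V := orbit (blockOp Ω₁ Ω₂ Γ) (sub2 H₁ H₂ : Set (DirSum H₁ H₂)) with hV
      have hVorth : Vᗮ = ⊥ := by
        apply h1
        · rw [← sub2_orthogonal]
          exact Submodule.orthogonal_le (le_of_eq_of_le rfl
            (fun x hx => subset_orbit _ _ hx))
        · exact orthogonal_invariant hsym (orbit_invariant _ _)
      rw [← Submodule.orthogonal_orthogonal V, hVorth, Submodule.bot_orthogonal_eq_top]
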